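/- Let f ∈ ℂ[x,y] be a primitive homogeneous polynomial of degree d > 1 (f is not of the form g^r for r > 1) whose singularity at the origin is not isolated (f_x and f_y have a common zero in ℂ² other than the origin). Then every torsion element of the Brieskorn module B(f) has torsion order 1, i.e. N(f) = 1: for every g ∈ ℂ[x,y], if f^k·g ∈ D_f for some k ≥ 1, then already f·g ∈ D_f. -/

import Mathlib

open MvPolynomial

/-- Membership in `D_f = {f_x·∂g/∂y − f_y·∂g/∂x : g ∈ ℂ[x,y]}`. -/
def Dmem (f w : MvPolynomial (Fin 2) ℂ) : Prop :=
  ∃ g : MvPolynomial (Fin 2) ℂ,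
    w = pderiv 0 f * pderiv 1 g - pderiv 1 f * pderiv 0 g

/-! The Hamiltonian derivation `{f, ·}` of a homogeneous `f` of degree `d ≥ 2` raises degrees
uniformly by `d - 2`, so `f² w = {f, G}` gives `f² ∣ {f, Gₙ}` for every homogeneous component
`Gₙ` of `G`. If a prime `p` had `f = p^a u`, `Gₙ = p^b v`, `p ∤ u v` and `b < a`, Euler's identity
would write `x{f, Gₙ}` and `y{f, Gₙ}` as `p^(a+b-1) ((n a - d b) ∂ᵢp u v + p ⋯)`, forcing `p` to
divide both of its partial derivatives, which no prime does. Hence `f ∣ Gₙ`, so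
`{f, Gₙ} = f {f, Gₙ / f}` and `f w ∈ D_f`; iterating, `f^k w ∈ D_f` implies `f w ∈ D_f`. -/

namespace MvPolynomial

section Degree

variable {σ R : Type*} [CommSemiring R]

theorem totalDegree_pderiv_le (p : MvPolynomial σ R) (i : σ) :
    (pderiv i p).totalDegree ≤ p.totalDegree - 1 := by
  classical
  refine Finset.sup_le fun m hm => ?_
  have hcoeff : coeff (m + Finsupp.single i 1) p ≠ 0 := by
    rw [mem_support_iff, coeff_pderiv] at hm
    exact left_ne_zero_of_mul hm
  have := le_totalDegree (mem_support_iff.mpr hcoeff)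
  rw [Finsupp.sum_add_index' (fun _ => rfl) (fun _ _ _ => rfl),
    Finsupp.sum_single_index rfl] at this
  omega

theorem pderiv_eq_zero_of_dvd_pderiv [IsDomain R] {p : MvPolynomial σ R} {i : σ}
    (h : p ∣ pderiv i p) : pderiv i p = 0 := by
  by_contra hne
  have hle := (totalDegree_le_of_dvd_of_isDomain h hne).trans (totalDegree_pderiv_le p i)
  have hp : p = C (coeff 0 p) := totalDegree_eq_zero_iff_eq_C.mp (by omega)
  exact hne (by rw [hp, pderiv_C])

theorem eq_C_of_forall_pderiv_eq_zero [NoZeroDivisors R] [CharZero R] {p : MvPolynomial σ R}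
    (h : ∀ i, pderiv i p = 0) : p = C (coeff 0 p) := by
  classical
  ext m
  rw [coeff_C]
  split_ifs with hm
  · rw [hm]
  obtain ⟨i, hi⟩ : ∃ i, m i ≠ 0 := by
    by_contra! hall
    exact hm (Finsupp.ext hall).symm
  have := coeff_pderiv (i := i) p (m - Finsupp.single i 1)
  rw [h, coeff_zero, tsub_add_cancel_of_le
    (Finsupp.single_le_iff.mpr (Nat.one_le_iff_ne_zero.mpr hi))] at this
  exact (mul_eq_zero.mp this.symm).resolve_right (by norm_cast)

theorem mul_pderiv_pow (p : MvPolynomial σ R) (n : ℕ) (i : σ) :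
    p * pderiv i (p ^ n) = n • (p ^ n * pderiv i p) := by
  rcases n with _ | n
  · simp
  · rw [pderiv_pow, nsmul_eq_mul, Nat.add_sub_cancel]
    ring

attribute [local instance] gradedAlgebra

theorem IsHomogeneous.dvd_homogeneousComponent_mul {φ : MvPolynomial σ R} {m : ℕ}
    (hφ : φ.IsHomogeneous m) (ψ : MvPolynomial σ R) (n : ℕ) :
    φ ∣ homogeneousComponent n (φ * ψ) := by
  rw [← decomposition.decompose'_apply]
  change φ ∣ (DirectSum.decompose (homogeneousSubmodule σ R) (φ * ψ) n : MvPolynomial σ R)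
  have := DirectSum.coe_decompose_mul_of_left_mem (𝒜 := homogeneousSubmodule σ R) (b := ψ) n
    ((mem_homogeneousSubmodule _ _).mpr hφ)
  rw [this]
  split_ifs
  exacts [dvd_mul_right _ _, dvd_zero _]

end Degree

section PrimeFactor

variable {σ K : Type*} [Field K] [CharZero K]

theorem Prime.exists_not_dvd_pderiv {p : MvPolynomial σ K} (hp : Prime p) :
    ∃ i, ¬ p ∣ pderiv i p := by
  by_contra! h
  have hC := eq_C_of_forall_pderiv_eq_zero fun i => pderiv_eq_zero_of_dvd_pderiv (h i)
  refine hp.not_isUnit (hC ▸ (Ne.isUnit fun h0 => hp.ne_zero ?_).map C)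
  rw [hC, h0, C_0]

theorem Prime.dvd_pderiv_of_pow_dvd {p u v f g : MvPolynomial σ K} {a b d m : ℕ} {i : σ}
    (hp : Prime p) (hu : ¬ p ∣ u) (hv : ¬ p ∣ v) (hf : f = p ^ a * u) (hg : g = p ^ b * v)
    (hdm : d * b < m * a)
    (h : p ^ (a + b + 1) ∣ m • (pderiv i f * g) - d • (f * pderiv i g)) :
    p ∣ pderiv i p := by
  obtain ⟨c, hc⟩ : ∃ c, m * a = d * b + (c + 1) := ⟨m * a - d * b - 1, by omega⟩
  have hexpand : p * (m • (pderiv i f * g) - d • (f * pderiv i g)) =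
      p ^ (a + b) * ((c + 1 : ℕ) • (pderiv i p * (u * v)) +
        p * (m • (pderiv i u * v) - d • (u * pderiv i v))) := by
    have hca : ((m * a : ℕ) : MvPolynomial σ K) = (d * b + (c + 1) : ℕ) := congrArg _ hc
    have ha := mul_pderiv_pow p a i
    have hb := mul_pderiv_pow p b i
    simp only [nsmul_eq_mul] at ha hb ⊢
    push_cast at hca ⊢
    rw [hf, hg, pderiv_mul, pderiv_mul]
    linear_combination (m * u * p ^ b * v) * ha - (d * p ^ a * u * v) * hb +
      (p ^ (a + b) * pderiv i p * u * v) * hca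
  have hQ : p ∣ (c + 1 : ℕ) • (pderiv i p * (u * v)) +
      p * (m • (pderiv i u * v) - d • (u * pderiv i v)) := by
    rw [← mul_dvd_mul_iff_left (pow_ne_zero (a + b) hp.ne_zero), ← hexpand, ← pow_succ]
    exact h.trans (dvd_mul_left _ _)
  have hpuv : p ∣ pderiv i p * (u * v) := by
    have := (dvd_add_left (dvd_mul_right _ _)).mp hQ
    rw [nsmul_eq_mul] at this
    exact ((Nat.cast_ne_zero.mpr c.succ_ne_zero).isUnit.map C).dvd_mul_left.mp
      (by rwa [← map_natCast C] at this)
  exact ((hp.dvd_or_dvd hpuv).resolve_right fun h' =>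
    (hp.dvd_or_dvd h').elim hu hv)

end PrimeFactor

section Hamiltonian

variable {R : Type*} [CommRing R]

noncomputable def hamiltonian (f : MvPolynomial (Fin 2) R) :
    Derivation R (MvPolynomial (Fin 2) R) (MvPolynomial (Fin 2) R) :=
  pderiv 0 f • pderiv 1 - pderiv 1 f • pderiv 0

@[simp]
theorem hamiltonian_apply (f g : MvPolynomial (Fin 2) R) :
    hamiltonian f g = pderiv 0 f * pderiv 1 g - pderiv 1 f * pderiv 0 g := rfl

theorem hamiltonian_mul_left (f u : MvPolynomial (Fin 2) R) :
    hamiltonian f (f * u) = f * hamiltonian f u := by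
  simp only [hamiltonian_apply, pderiv_mul]
  ring

theorem isHomogeneous_hamiltonian {f g : MvPolynomial (Fin 2) R} {k m : ℕ}
    (hf : f.IsHomogeneous (k + 2)) (hg : g.IsHomogeneous m) :
    (hamiltonian f g).IsHomogeneous (m + k) := by
  rcases m with _ | m
  · rw [← totalDegree_zero_iff_isHomogeneous, totalDegree_eq_zero_iff_eq_C] at hg
    rw [hg, hamiltonian_apply, pderiv_C, pderiv_C, mul_zero, mul_zero, sub_zero]
    exact isHomogeneous_zero _ _ _
  · have := (hf.pderiv (i := 0)).mul (hg.pderiv (i := 1)) |>.sub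
      ((hf.pderiv (i := 1)).mul (hg.pderiv (i := 0)))
    rwa [show k + 2 - 1 + (m + 1 - 1) = m + 1 + k by omega] at this

theorem homogeneousComponent_hamiltonian {f : MvPolynomial (Fin 2) R} {k : ℕ}
    (hf : f.IsHomogeneous (k + 2)) (G : MvPolynomial (Fin 2) R) (n : ℕ) :
    homogeneousComponent (n + k) (hamiltonian f G) =
      hamiltonian f (homogeneousComponent n G) := by
  conv_lhs => rw [← sum_homogeneousComponent G, map_sum, map_sum]
  simp_rw [homogeneousComponent_of_mem ((mem_homogeneousSubmodule _ _).mpr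
    (isHomogeneous_hamiltonian hf (homogeneousComponent_isHomogeneous _ G))), add_left_inj,
    Finset.sum_ite_eq, Finset.mem_range]
  split_ifs with hn
  · rfl
  · rw [homogeneousComponent_eq_zero _ _ (by omega), map_zero]

/-- Euler's identity turns `y·{f, g}` into the numerator of `∂ₓ(f^m / g^d)`. -/
theorem X_one_mul_hamiltonian {f g : MvPolynomial (Fin 2) R} {d m : ℕ}
    (hf : f.IsHomogeneous d) (hg : g.IsHomogeneous m) :
    X 1 * hamiltonian f g = m • (pderiv 0 f * g) - d • (f * pderiv 0 g) := by
  have ef := hf.sum_X_mul_pderiv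
  have eg := hg.sum_X_mul_pderiv
  simp only [Fin.sum_univ_two, nsmul_eq_mul] at ef eg
  rw [hamiltonian_apply, nsmul_eq_mul, nsmul_eq_mul]
  linear_combination pderiv 0 f * eg - pderiv 0 g * ef

theorem X_zero_mul_hamiltonian {f g : MvPolynomial (Fin 2) R} {d m : ℕ}
    (hf : f.IsHomogeneous d) (hg : g.IsHomogeneous m) :
    X 0 * hamiltonian f g = -(m • (pderiv 1 f * g) - d • (f * pderiv 1 g)) := by
  have ef := hf.sum_X_mul_pderiv
  have eg := hg.sum_X_mul_pderiv
  simp only [Fin.sum_univ_two, nsmul_eq_mul] at ef eg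
  rw [hamiltonian_apply, nsmul_eq_mul, nsmul_eq_mul]
  linear_combination pderiv 1 g * ef - pderiv 1 f * eg

end Hamiltonian

section Descent

variable {K : Type*} [Field K] [CharZero K]

theorem IsHomogeneous.dvd_of_sq_dvd_hamiltonian {f g : MvPolynomial (Fin 2) K} {d m : ℕ}
    (hf : f.IsHomogeneous d) (hg : g.IsHomogeneous m) (hdm : d < m) (hf0 : f ≠ 0)
    (h : f ^ 2 ∣ hamiltonian f g) : f ∣ g := by
  rcases eq_or_ne g 0 with rfl | hg0
  · exact dvd_zero f
  rw [UniqueFactorizationMonoid.dvd_iff_emultiplicity_le hf0]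
  intro p hp
  obtain ⟨a, u, hu, hfu⟩ := WfDvdMonoid.max_power_factor hf0 hp.irreducible
  obtain ⟨b, v, hv, hgv⟩ := WfDvdMonoid.max_power_factor hg0 hp.irreducible
  suffices hab : a ≤ b by
    rw [emultiplicity_le_emultiplicity_iff]
    intro n hn
    rw [hfu] at hn
    exact (hp.pow_dvd_of_dvd_mul_right n hu hn).trans
      ((pow_dvd_pow p hab).trans (hgv ▸ dvd_mul_right _ _))
  by_contra! hba
  obtain ⟨i, hi⟩ := hp.exists_not_dvd_pderiv
  refine hi (hp.dvd_pderiv_of_pow_dvd (d := d) (m := m) hu hv hfu hgv ?_ ?_)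
  · calc d * b ≤ m * b := Nat.mul_le_mul_right b hdm.le
      _ < m * a := Nat.mul_lt_mul_of_pos_left hba (by omega)
  have hJ : p ^ (a + b + 1) ∣ hamiltonian f g :=
    calc p ^ (a + b + 1) ∣ (p ^ a) ^ 2 := by rw [← pow_mul]; exact pow_dvd_pow p (by omega)
      _ ∣ f ^ 2 := pow_dvd_pow_of_dvd (hfu ▸ dvd_mul_right _ _) 2
      _ ∣ hamiltonian f g := h
  match i with
  | 0 => exact X_one_mul_hamiltonian hf hg ▸ hJ.mul_left _
  | 1 => exact dvd_neg.mp (X_zero_mul_hamiltonian hf hg ▸ hJ.mul_left _)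

theorem IsHomogeneous.exists_hamiltonian_eq_mul_of_sq_dvd {f g : MvPolynomial (Fin 2) K}
    {k n : ℕ} (hf : f.IsHomogeneous (k + 2)) (hg : g.IsHomogeneous n) (hf0 : f ≠ 0)
    (h : f ^ 2 ∣ hamiltonian f g) : ∃ u, hamiltonian f g = f * hamiltonian f u := by
  by_cases h0 : hamiltonian f g = 0
  · exact ⟨0, by rw [h0, map_zero, mul_zero]⟩
  have hdeg := totalDegree_le_of_dvd_of_isDomain h h0
  rw [(hf.pow 2).totalDegree (pow_ne_zero 2 hf0),
    (isHomogeneous_hamiltonian hf hg).totalDegree h0] at hdeg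
  obtain ⟨u, rfl⟩ := hf.dvd_of_sq_dvd_hamiltonian hg (by omega) hf0 h
  exact ⟨u, hamiltonian_mul_left f u⟩

theorem IsHomogeneous.exists_hamiltonian_of_sq_mul {f w G : MvPolynomial (Fin 2) K} {k : ℕ}
    (hf : f.IsHomogeneous (k + 2)) (hf0 : f ≠ 0) (h : f ^ 2 * w = hamiltonian f G) :
    ∃ G', f * w = hamiltonian f G' := by
  have hcomp (n : ℕ) : ∃ u, hamiltonian f (homogeneousComponent n G) = f * hamiltonian f u := by
    refine hf.exists_hamiltonian_eq_mul_of_sq_dvd (homogeneousComponent_isHomogeneous n G) hf0 ?_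
    rw [← homogeneousComponent_hamiltonian hf, ← h]
    exact (hf.pow 2).dvd_homogeneousComponent_mul w _
  choose u hu using hcomp
  refine ⟨∑ n ∈ Finset.range (G.totalDegree + 1), u n, mul_left_cancel₀ hf0 ?_⟩
  calc f * (f * w) = hamiltonian f G := by rw [← h]; ring
    _ = ∑ n ∈ Finset.range (G.totalDegree + 1), hamiltonian f (homogeneousComponent n G) := by
      rw [← map_sum, sum_homogeneousComponent]
    _ = _ := by simp_rw [hu, map_sum, Finset.mul_sum]

theorem IsHomogeneous.exists_hamiltonian_of_pow_mul {f w G : MvPolynomial (Fin 2) K} {k : ℕ}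
    (hf : f.IsHomogeneous (k + 2)) (hf0 : f ≠ 0) (j : ℕ)
    (h : f ^ (j + 1) * w = hamiltonian f G) : ∃ G', f * w = hamiltonian f G' := by
  induction j generalizing G with
  | zero => exact ⟨G, by rwa [zero_add, pow_one] at h⟩
  | succ j ih =>
    obtain ⟨G', hG'⟩ := hf.exists_hamiltonian_of_sq_mul hf0
      (w := f ^ j * w) (by rw [← h]; ring)
    exact ih (by rw [← hG']; ring)

end Descent

end MvPolynomial

theorem statement9_general (f : MvPolynomial (Fin 2) ℂ) (d : ℕ) (hd : 1 < d)
    (hf : f.IsHomogeneous d) :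
    ∀ (g : MvPolynomial (Fin 2) ℂ) (k : ℕ), 1 ≤ k → Dmem f (f ^ k * g) → Dmem f (f * g) := by
  obtain ⟨e, rfl⟩ : ∃ e, d = e + 2 := ⟨d - 2, by omega⟩
  rintro g k hk ⟨G, hG⟩
  rcases eq_or_ne f 0 with rfl | hf0
  · exact ⟨0, by simp⟩
  obtain ⟨j, rfl⟩ : ∃ j, k = j + 1 := ⟨k - 1, by omega⟩
  exact hf.exists_hamiltonian_of_pow_mul hf0 j hG

/-- For `f ∈ ℂ[x,y]` primitive homogeneous of degree `d > 1` with a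
non-isolated singularity at the origin, every torsion element of the Brieskorn module
`B(f) = ℂ[x,y]/D_f` has torsion order `1`, i.e. `N(f) = 1`. -/
theorem statement9 (f : MvPolynomial (Fin 2) ℂ) (d : ℕ) (hd : 1 < d)
    (hf : f.IsHomogeneous d)
    (hprim : ¬ ∃ (g : MvPolynomial (Fin 2) ℂ) (r : ℕ), 1 < r ∧ f = g ^ r)
    (hni : ∃ p : Fin 2 → ℂ, p ≠ 0 ∧ eval p (pderiv 0 f) = 0 ∧ eval p (pderiv 1 f) = 0) :
    ∀ (g : MvPolynomial (Fin 2) ℂ) (k : ℕ), 1 ≤ k → Dmem f (f ^ k * g) → Dmem f (f * g) :=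
  statement9_general f d hd hf
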